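/- Let Λ = diag(ρ₁,…,ρ_K) with ρ_k ≥ 0 and σ > 0, and for Ψ ∈ ℝ^{M×K} let Γ(Ψ) = ΨΛΨᵀ + σ² I_M and g(Ψ) = trace(ΛΨᵀΓ(Ψ)⁻¹ΨΛ). Let (Ω, μ), ψ₁,…,ψ_K, ξ, ε, s, and the reconstruction X̃ be as follows: ψ₁,…,ψ_K are orthonormal in L²(μ); ξ ∈ ℝ^K is a random vector with mean 0 and covariance Λ; ε ∈ ℝ^M has mean 0, covariance σ² I_M, and is uncorrelated with ξ; s = m + Ψξ + ε; X(p) = μ₀(p) + Σ_k ξ_k ψ_k(p); and X̃_Ψ(p) = μ₀(p) + Σ_k (ΛΨᵀΓ(Ψ)⁻¹(s − m))_k ψ_k(p). Then for any two designs Ψ₁ ∈ ℝ^{M×K} and Ψ₂ ∈ ℝ^{M×K} (with their respective observation vectors generated by the same model), E[∫(X − X̃_{Ψ₁})² dμ] ≤ E[∫(X − X̃_{Ψ₂})² dμ] if and only if g(Ψ₁) ≥ g(Ψ₂). In particular, a design minimizes the expected integrated squared error of the conditional-mean reconstruction if and only if it maximizes g. -/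

import Mathlib

open Matrix MeasureTheory

/-!
Write `Γ = ΨΛΨᵀ + σ²I` (positive definite, hence invertible), `A = ΛΨᵀΓ⁻¹` for the gain and
`Z = (ξ, ε)` for the joint noise vector. The reconstruction error is `X − X̃_Ψ = ∑ₖ (W Z)ₖ ψₖ`
with `W = [1 − AΨ | −A]`, so orthonormality of the `ψₖ` turns the inner integral into `|W Z|²`.
As `ξ` and `ε` are uncorrelated, `E[Z Zᵀ] = diag(Λ, σ²I)`, and therefore
`E ∫ (X − X̃_Ψ)² dμ = tr((1 − AΨ)Λ(1 − AΨ)ᵀ + σ² AAᵀ)`. Since `AΓ = ΛΨᵀ`, this Joseph form of the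
error covariance collapses to `Λ − AΨΛ`, whose trace is `tr Λ − g(Ψ)`.
-/

/-- The design objective `g(Ψ) = trace(ΛΨᵀ(ΨΛΨᵀ + σ²I)⁻¹ΨΛ)`. -/
noncomputable def gObj {M K : ℕ} (ρ : Fin K → ℝ) (σ : ℝ)
    (Ψ : Matrix (Fin M) (Fin K) ℝ) : ℝ :=
  Matrix.trace (Matrix.diagonal ρ * Ψᵀ *
    (Ψ * Matrix.diagonal ρ * Ψᵀ + σ ^ 2 • 1)⁻¹ * Ψ * Matrix.diagonal ρ)

/-- The expected integrated squared error `E ∫ (X − X̃_Ψ)² dμ` of the conditional-mean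
reconstruction `X̃_Ψ(p) = μ₀(p) + ∑_k (ΛΨᵀΓ(Ψ)⁻¹(s − m))_k ψ_k(p)` of the signal
`X(p) = μ₀(p) + ∑_k ξ_k ψ_k(p)` from the observations `s = m + Ψξ + ε`. -/
noncomputable def expISE {Ω Ω' : Type*} [MeasurableSpace Ω] [MeasurableSpace Ω']
    (μ : Measure Ω) (P : Measure Ω') {K M : ℕ} (ψ : Fin K → Ω → ℝ) (μ₀ : Ω → ℝ)
    (ρ : Fin K → ℝ) (σ : ℝ) (ξ : Ω' → Fin K → ℝ) (ε : Ω' → Fin M → ℝ)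
    (mvec : Fin M → ℝ) (Ψ : Matrix (Fin M) (Fin K) ℝ) : ℝ :=
  ∫ ω, ∫ p,
      ((μ₀ p + ∑ k, ξ ω k * ψ k p) -
        (μ₀ p + ∑ k,
          ((Matrix.diagonal ρ * Ψᵀ *
              (Ψ * Matrix.diagonal ρ * Ψᵀ + σ ^ 2 • 1)⁻¹).mulVec
            ((mvec + Ψ.mulVec (ξ ω) + ε ω) - mvec)) k * ψ k p)) ^ 2 ∂μ ∂P

noncomputable def secondMoment {α ι : Type*} [MeasurableSpace α] (μ : Measure α)
    (Z : α → ι → ℝ) : Matrix ι ι ℝ :=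
  Matrix.of fun i j => ∫ x, Z x i * Z x j ∂μ

lemma secondMoment_eq_one_of_orthonormal {α ι : Type*} [MeasurableSpace α] [DecidableEq ι]
    {μ : Measure α} {ψ : ι → α → ℝ}
    (hψ : ∀ j k, ∫ p, ψ j p * ψ k p ∂μ = if j = k then (1 : ℝ) else 0) :
    secondMoment μ (fun p k => ψ k p) = 1 := by
  ext j k
  exact hψ j k

section SecondMoment

variable {α ι κ : Type*} [MeasurableSpace α] [Fintype ι] {μ : Measure α} {Z : α → ι → ℝ}

lemma sq_dotProduct_eq_sum_sum (c z : ι → ℝ) :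
    (c ⬝ᵥ z) ^ 2 = ∑ i, ∑ j, c i * c j * (z i * z j) := by
  rw [sq, dotProduct, Finset.sum_mul_sum]
  exact Finset.sum_congr rfl fun i _ => Finset.sum_congr rfl fun j _ => by ring

lemma integrable_sq_dotProduct (hZ : ∀ i j, Integrable (fun x => Z x i * Z x j) μ)
    (c : ι → ℝ) : Integrable (fun x => (c ⬝ᵥ Z x) ^ 2) μ := by
  simp_rw [sq_dotProduct_eq_sum_sum]
  exact integrable_finsetSum _ fun i _ => integrable_finsetSum _ fun j _ =>
    (hZ i j).const_mul _

lemma integral_sq_dotProduct (hZ : ∀ i j, Integrable (fun x => Z x i * Z x j) μ)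
    (c : ι → ℝ) : ∫ x, (c ⬝ᵥ Z x) ^ 2 ∂μ = c ⬝ᵥ (secondMoment μ Z *ᵥ c) := by
  simp_rw [sq_dotProduct_eq_sum_sum]
  rw [integral_finsetSum _ fun i _ => integrable_finsetSum _ fun j _ => (hZ i j).const_mul _]
  simp_rw [integral_finsetSum _ fun j _ => (hZ _ j).const_mul _, integral_const_mul]
  simp only [dotProduct, mulVec, secondMoment, of_apply, Finset.mul_sum]
  exact Finset.sum_congr rfl fun i _ => Finset.sum_congr rfl fun j _ => by ring

lemma integral_mulVec_dotProduct_self [Fintype κ]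
    (hZ : ∀ i j, Integrable (fun x => Z x i * Z x j) μ) (W : Matrix κ ι ℝ) :
    ∫ x, (W *ᵥ Z x) ⬝ᵥ (W *ᵥ Z x) ∂μ = trace (W * secondMoment μ Z * Wᵀ) := by
  have hrows : ∀ x, (W *ᵥ Z x) ⬝ᵥ (W *ᵥ Z x) = ∑ k, (W k ⬝ᵥ Z x) ^ 2 := fun x =>
    Finset.sum_congr rfl fun k _ => (sq _).symm
  simp_rw [hrows]
  rw [integral_finsetSum _ fun k _ => integrable_sq_dotProduct hZ (W k)]
  simp_rw [integral_sq_dotProduct hZ]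
  simp only [trace, diag, mul_apply, transpose_apply, dotProduct, mulVec, Finset.sum_mul,
    Finset.mul_sum]
  refine Finset.sum_congr rfl fun k _ => ?_
  rw [Finset.sum_comm]
  exact Finset.sum_congr rfl fun i _ => Finset.sum_congr rfl fun j _ => by ring

lemma integral_sq_dotProduct_of_orthonormal [DecidableEq ι] {ψ : ι → α → ℝ}
    (hψint : ∀ j k, Integrable (fun p => ψ j p * ψ k p) μ)
    (hψ : ∀ j k, ∫ p, ψ j p * ψ k p ∂μ = if j = k then (1 : ℝ) else 0) (c : ι → ℝ) :
    ∫ p, (c ⬝ᵥ fun k => ψ k p) ^ 2 ∂μ = c ⬝ᵥ c := by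
  rw [integral_sq_dotProduct (Z := fun p k => ψ k p) hψint,
    secondMoment_eq_one_of_orthonormal hψ, one_mulVec]

end SecondMoment

section Joint

variable {α ι κ : Type*} [MeasurableSpace α] {μ : Measure α} {ξ : α → κ → ℝ} {ε : α → ι → ℝ}

lemma integrable_sumElim_mul (hξ : ∀ j k, Integrable (fun x => ξ x j * ξ x k) μ)
    (hε : ∀ i j, Integrable (fun x => ε x i * ε x j) μ)
    (hξε : ∀ k i, Integrable (fun x => ξ x k * ε x i) μ) (a b : κ ⊕ ι) :
    Integrable (fun x => Sum.elim (ξ x) (ε x) a * Sum.elim (ξ x) (ε x) b) μ := by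
  rcases a with k | i <;> rcases b with j | j
  · exact hξ k j
  · exact hξε k j
  · simp only [Sum.elim_inl, Sum.elim_inr, mul_comm (ε _ i)]
    exact hξε j i
  · exact hε i j

lemma secondMoment_sumElim_of_uncorrelated (hξε : ∀ k i, ∫ x, ξ x k * ε x i ∂μ = 0) :
    secondMoment μ (fun x => Sum.elim (ξ x) (ε x)) =
      fromBlocks (secondMoment μ ξ) 0 0 (secondMoment μ ε) := by
  ext (k | i) (j | j)
  · rfl
  · exact hξε k j
  · change ∫ x, ε x i * ξ x j ∂μ = 0
    simpa only [mul_comm] using hξε j i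
  · rfl

end Joint

lemma joseph_form_eq_of_normal_eq {κ m : Type*} [Fintype κ] [Fintype m] [DecidableEq κ]
    {Λ : Matrix κ κ ℝ} {R : Matrix m m ℝ} {Ψ : Matrix m κ ℝ} {A : Matrix κ m ℝ}
    (hA : A * (Ψ * Λ * Ψᵀ + R) = Λ * Ψᵀ) :
    (1 - A * Ψ) * Λ * (1 - A * Ψ)ᵀ + A * R * Aᵀ = Λ - A * Ψ * Λ := by
  have hquad : A * Ψ * Λ * (A * Ψ)ᵀ + A * R * Aᵀ = Λ * (A * Ψ)ᵀ := by
    rw [transpose_mul, ← Matrix.mul_assoc Λ, ← hA]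
    simp only [Matrix.mul_add, Matrix.add_mul, Matrix.mul_assoc]
  rw [transpose_sub, transpose_one]
  calc (1 - A * Ψ) * Λ * (1 - (A * Ψ)ᵀ) + A * R * Aᵀ
      = Λ - A * Ψ * Λ - Λ * (A * Ψ)ᵀ + (A * Ψ * Λ * (A * Ψ)ᵀ + A * R * Aᵀ) := by
        simp only [Matrix.sub_mul, Matrix.mul_sub, Matrix.one_mul, Matrix.mul_one]; abel
    _ = Λ - A * Ψ * Λ := by rw [hquad]; abel

lemma posDef_mul_mul_transpose_add_smul_one {κ m : Type*} [Fintype κ] [Fintype m]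
    [DecidableEq m] {Λ : Matrix κ κ ℝ} (hΛ : Λ.PosSemidef) (Ψ : Matrix m κ ℝ) {c : ℝ}
    (hc : 0 < c) : (Ψ * Λ * Ψᵀ + c • 1).PosDef := by
  have h := hΛ.mul_mul_conjTranspose_same Ψ
  rw [conjTranspose_eq_transpose_of_trivial] at h
  exact PosDef.posSemidef_add h (PosDef.one.smul hc)

lemma expISE_eq_trace_sub_gObj {Ω Ω' : Type*} [MeasurableSpace Ω] [MeasurableSpace Ω']
    {μ : Measure Ω} {P : Measure Ω'} {K M : ℕ} {ψ : Fin K → Ω → ℝ}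
    (hψint : ∀ j k, Integrable (fun p => ψ j p * ψ k p) μ)
    (hψortho : ∀ j k, ∫ p, ψ j p * ψ k p ∂μ = if j = k then (1 : ℝ) else 0)
    {ρ : Fin K → ℝ} (hρ : ∀ k, 0 ≤ ρ k) {σ : ℝ} (hσ : σ ≠ 0)
    {ξ : Ω' → Fin K → ℝ} {ε : Ω' → Fin M → ℝ}
    (hξint : ∀ j k, Integrable (fun ω => ξ ω j * ξ ω k) P)
    (hεint : ∀ i j, Integrable (fun ω => ε ω i * ε ω j) P)
    (hξεint : ∀ k i, Integrable (fun ω => ξ ω k * ε ω i) P)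
    (hξcov : ∀ j k, ∫ ω, ξ ω j * ξ ω k ∂P = diagonal ρ j k)
    (hεcov : ∀ i j, ∫ ω, ε ω i * ε ω j ∂P = if i = j then σ ^ 2 else 0)
    (hξε : ∀ k i, ∫ ω, ξ ω k * ε ω i ∂P = 0)
    (mvec : Fin M → ℝ) (μ₀ : Ω → ℝ) (Ψ : Matrix (Fin M) (Fin K) ℝ) :
    expISE μ P ψ μ₀ ρ σ ξ ε mvec Ψ = trace (diagonal ρ) - gObj ρ σ Ψ := by
  set Γ := Ψ * diagonal ρ * Ψᵀ + σ ^ 2 • (1 : Matrix (Fin M) (Fin M) ℝ)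
  set A := diagonal ρ * Ψᵀ * Γ⁻¹
  set W := fromCols (1 - A * Ψ) (-A)
  have hΓ : IsUnit Γ.det :=
    (posDef_mul_mul_transpose_add_smul_one (posSemidef_diagonal_iff.2 hρ) Ψ
      (by positivity)).det_pos.ne'.isUnit
  have herr : ∀ ω, ξ ω - A *ᵥ (mvec + Ψ *ᵥ ξ ω + ε ω - mvec) = W *ᵥ Sum.elim (ξ ω) (ε ω) := by
    intro ω
    rw [fromCols_mulVec_sumElim, add_assoc, add_sub_cancel_left, mulVec_add, sub_mulVec,
      one_mulVec, neg_mulVec, mulVec_mulVec]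
    abel
  have hpath : ∀ ω, ∫ p, ((μ₀ p + ∑ k, ξ ω k * ψ k p) -
        (μ₀ p + ∑ k, (A *ᵥ (mvec + Ψ *ᵥ ξ ω + ε ω - mvec)) k * ψ k p)) ^ 2 ∂μ =
      (W *ᵥ Sum.elim (ξ ω) (ε ω)) ⬝ᵥ (W *ᵥ Sum.elim (ξ ω) (ε ω)) := by
    intro ω
    rw [← herr, ← integral_sq_dotProduct_of_orthonormal hψint hψortho]
    simp only [add_sub_add_left_eq_sub, sub_dotProduct]
    rfl
  have hmoment : secondMoment P (fun ω => Sum.elim (ξ ω) (ε ω)) =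
      fromBlocks (diagonal ρ) 0 0 (σ ^ 2 • 1) := by
    rw [secondMoment_sumElim_of_uncorrelated hξε]
    congr
    · ext j k; exact hξcov j k
    · ext i j; simp [secondMoment, hεcov, one_apply]
  calc expISE μ P ψ μ₀ ρ σ ξ ε mvec Ψ
      = ∫ ω, (W *ᵥ Sum.elim (ξ ω) (ε ω)) ⬝ᵥ (W *ᵥ Sum.elim (ξ ω) (ε ω)) ∂P :=
        integral_congr_ae (ae_of_all _ hpath)
    _ = trace (W * secondMoment P (fun ω => Sum.elim (ξ ω) (ε ω)) * Wᵀ) :=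
        integral_mulVec_dotProduct_self (integrable_sumElim_mul hξint hεint hξεint) W
    _ = trace ((1 - A * Ψ) * diagonal ρ * (1 - A * Ψ)ᵀ +
          A * (σ ^ 2 • (1 : Matrix (Fin M) (Fin M) ℝ)) * Aᵀ) := by
        rw [hmoment, fromCols_mul_fromBlocks, transpose_fromCols, fromCols_mul_fromRows]
        simp only [Matrix.mul_zero, add_zero, zero_add, transpose_neg, Matrix.neg_mul,
          Matrix.mul_neg, neg_neg]
    _ = trace (diagonal ρ) - gObj ρ σ Ψ := by
        rw [joseph_form_eq_of_normal_eq (by rw [Matrix.mul_assoc, nonsing_inv_mul _ hΓ,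
          Matrix.mul_one]), trace_sub]
        rfl

theorem ISE_ordering_iff_design_objective_ordering_general
    {Ω : Type*} [MeasurableSpace Ω] (μ : Measure Ω)
    {Ω' : Type*} [MeasurableSpace Ω'] (P : Measure Ω')
    {K M : ℕ} (ψ : Fin K → Ω → ℝ)
    (hψint : ∀ j k, Integrable (fun p => ψ j p * ψ k p) μ)
    (hψortho : ∀ j k, ∫ p, ψ j p * ψ k p ∂μ = if j = k then (1 : ℝ) else 0)
    (ρ : Fin K → ℝ) (hρ : ∀ k, 0 ≤ ρ k) (σ : ℝ) (hσ : 0 < σ)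
    (ξ : Ω' → Fin K → ℝ) (ε : Ω' → Fin M → ℝ)
    (hξint : ∀ j k, Integrable (fun ω => ξ ω j * ξ ω k) P)
    (hεint : ∀ i j, Integrable (fun ω => ε ω i * ε ω j) P)
    (hξεint : ∀ k i, Integrable (fun ω => ξ ω k * ε ω i) P)
    (hξcov : ∀ j k, ∫ ω, ξ ω j * ξ ω k ∂P = Matrix.diagonal ρ j k)
    (hεcov : ∀ i j, ∫ ω, ε ω i * ε ω j ∂P = if i = j then σ ^ 2 else 0)
    (hξε : ∀ k i, ∫ ω, ξ ω k * ε ω i ∂P = 0)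
    (mvec : Fin M → ℝ) (μ₀ : Ω → ℝ)
    (Ψ₁ Ψ₂ : Matrix (Fin M) (Fin K) ℝ) :
    expISE μ P ψ μ₀ ρ σ ξ ε mvec Ψ₁ ≤ expISE μ P ψ μ₀ ρ σ ξ ε mvec Ψ₂ ↔
      gObj ρ σ Ψ₂ ≤ gObj ρ σ Ψ₁ := by
  have hISE := fun Ψ => expISE_eq_trace_sub_gObj hψint hψortho hρ hσ.ne' hξint hεint hξεint
    hξcov hεcov hξε mvec μ₀ Ψ
  rw [hISE, hISE, sub_le_sub_iff_left]

/-- A design `Ψ₁` yields expected integrated squared error no larger than `Ψ₂` if and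
only if `g(Ψ₁) ≥ g(Ψ₂)`; in particular, minimizing the expected ISE is equivalent to
maximizing the design objective `g`. -/
theorem ISE_ordering_iff_design_objective_ordering
    {Ω : Type*} [MeasurableSpace Ω] (μ : Measure Ω)
    {Ω' : Type*} [MeasurableSpace Ω'] (P : Measure Ω') [IsProbabilityMeasure P]
    {K M : ℕ} (ψ : Fin K → Ω → ℝ)
    (hψmeas : ∀ k, Measurable (ψ k))
    (hψint : ∀ j k, Integrable (fun p => ψ j p * ψ k p) μ)
    (hψortho : ∀ j k, ∫ p, ψ j p * ψ k p ∂μ = if j = k then (1 : ℝ) else 0)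
    (ρ : Fin K → ℝ) (hρ : ∀ k, 0 ≤ ρ k) (σ : ℝ) (hσ : 0 < σ)
    (ξ : Ω' → Fin K → ℝ) (ε : Ω' → Fin M → ℝ)
    (hξmeas : ∀ k, Measurable fun ω => ξ ω k)
    (hεmeas : ∀ i, Measurable fun ω => ε ω i)
    (hξint1 : ∀ k, Integrable (fun ω => ξ ω k) P)
    (hεint1 : ∀ i, Integrable (fun ω => ε ω i) P)
    (hξint : ∀ j k, Integrable (fun ω => ξ ω j * ξ ω k) P)
    (hεint : ∀ i j, Integrable (fun ω => ε ω i * ε ω j) P)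
    (hξεint : ∀ k i, Integrable (fun ω => ξ ω k * ε ω i) P)
    (hξmean : ∀ k, ∫ ω, ξ ω k ∂P = 0)
    (hεmean : ∀ i, ∫ ω, ε ω i ∂P = 0)
    (hξcov : ∀ j k, ∫ ω, ξ ω j * ξ ω k ∂P = Matrix.diagonal ρ j k)
    (hεcov : ∀ i j, ∫ ω, ε ω i * ε ω j ∂P = if i = j then σ ^ 2 else 0)
    (hξε : ∀ k i, ∫ ω, ξ ω k * ε ω i ∂P = 0)
    (mvec : Fin M → ℝ) (μ₀ : Ω → ℝ)
    (Ψ₁ Ψ₂ : Matrix (Fin M) (Fin K) ℝ) :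
    expISE μ P ψ μ₀ ρ σ ξ ε mvec Ψ₁ ≤ expISE μ P ψ μ₀ ρ σ ξ ε mvec Ψ₂ ↔
      gObj ρ σ Ψ₂ ≤ gObj ρ σ Ψ₁ :=
  ISE_ordering_iff_design_objective_ordering_general μ P ψ hψint hψortho ρ hρ σ hσ ξ ε hξint hεint
    hξεint hξcov hεcov hξε mvec μ₀ Ψ₁ Ψ₂
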